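/- Let n ≥ 1, c ≥ 1, 0 < ε ≤ 1, and let q, q' : Fin n → Fin c → ℝ be two arrays whose rows are probability vectors (all entries in [0,1] and each row sums to 1) and which agree on every row except possibly one row j. Define the averaged assignments p_l = (1/n) Σ_{i=1}^{n} q_{il} and p'_l = (1/n) Σ_{i=1}^{n} q'_{il}, and assume p_l, p'_l ∈ [ε, 1] for all l. Then |Σ_{l=1}^{c} p_l log p_l − Σ_{l=1}^{c} p'_l log p'_l| ≤ 2 (1 + log(1/ε)) / n. -/

import Mathlib

/-!
Replacing row `j` moves each column average by `|q j l - q' j l| / n`, and these moves sum to at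
most `2 / n` because both rows are probability vectors. Since `(x log x)' = log x + 1` has absolute
value at most `1 + log (1 / ε)` on `[ε, 1]`, the mean value theorem turns this into the bound.
-/

open Finset Real

lemma abs_log_add_one_le {ε x : ℝ} (hε : 0 < ε) (hx : x ∈ Set.Icc ε 1) :
    |log x + 1| ≤ 1 + log (1 / ε) := by
  have hlog_ge : log ε ≤ log x := log_le_log hε hx.1
  have hlog_nonpos : log x ≤ 0 := log_nonpos (hε.le.trans hx.1) hx.2
  rw [one_div, log_inv, abs_le]
  constructor <;> linarith

lemma abs_mul_log_sub_mul_log_le {ε x y : ℝ} (hε : 0 < ε) (hx : x ∈ Set.Icc ε 1)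
    (hy : y ∈ Set.Icc ε 1) :
    |x * log x - y * log y| ≤ (1 + log (1 / ε)) * |x - y| :=
  (convex_Icc ε 1).norm_image_sub_le_of_norm_hasDerivWithin_le
    (fun _ hz => (hasDerivAt_mul_log (hε.trans_le hz.1).ne').hasDerivWithinAt)
    (fun _ hz => abs_log_add_one_le hε hz) hy hx

lemma abs_sum_mul_log_sub_sum_mul_log_le {ι : Type*} [Fintype ι] {ε : ℝ} (hε : 0 < ε)
    {p p' : ι → ℝ} (hp : ∀ l, p l ∈ Set.Icc ε 1) (hp' : ∀ l, p' l ∈ Set.Icc ε 1) :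
    |∑ l, p l * log (p l) - ∑ l, p' l * log (p' l)| ≤ (1 + log (1 / ε)) * ∑ l, |p l - p' l| := by
  rw [← sum_sub_distrib, mul_sum]
  exact (abs_sum_le_sum_abs _ _).trans
    (sum_le_sum fun l _ => abs_mul_log_sub_mul_log_le hε (hp l) (hp' l))

lemma sum_abs_sub_le_two {ι : Type*} [Fintype ι] {u v : ι → ℝ} (hu : ∀ l, 0 ≤ u l)
    (hv : ∀ l, 0 ≤ v l) (hu_sum : ∑ l, u l = 1) (hv_sum : ∑ l, v l = 1) :
    ∑ l, |u l - v l| ≤ 2 :=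
  calc ∑ l, |u l - v l| ≤ ∑ l, (u l + v l) := sum_le_sum fun l _ => by
          simpa only [abs_of_nonneg (hu l), abs_of_nonneg (hv l)] using abs_sub (u l) (v l)
    _ = 2 := by rw [sum_add_distrib, hu_sum, hv_sum]; norm_num

lemma sum_sub_sum_eq_of_eq_of_ne {ι M : Type*} [Fintype ι] [AddCommGroup M] {f g : ι → M} (j : ι)
    (hfg : ∀ i, i ≠ j → f i = g i) : ∑ i, f i - ∑ i, g i = f j - g j := by
  rw [← sum_sub_distrib]
  exact Fintype.sum_eq_single j fun i hi => sub_eq_zero.2 (hfg i hi)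

theorem bounded_difference_entropy_average_general
    (n c : ℕ) (ε : ℝ) (hε0 : 0 < ε) (hε1 : ε ≤ 1)
    (q q' : Fin n → Fin c → ℝ)
    (hq01 : ∀ i l, q i l ∈ Set.Icc (0 : ℝ) 1) (hq'01 : ∀ i l, q' i l ∈ Set.Icc (0 : ℝ) 1)
    (hqsum : ∀ i, ∑ l, q i l = 1) (hq'sum : ∀ i, ∑ l, q' i l = 1)
    (j : Fin n) (hagree : ∀ i, i ≠ j → q i = q' i)
    (p p' : Fin c → ℝ)
    (hp : ∀ l, p l = (1 / n : ℝ) * ∑ i, q i l)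
    (hp' : ∀ l, p' l = (1 / n : ℝ) * ∑ i, q' i l)
    (hpε : ∀ l, p l ∈ Set.Icc ε 1) (hp'ε : ∀ l, p' l ∈ Set.Icc ε 1) :
    |∑ l, p l * Real.log (p l) - ∑ l, p' l * Real.log (p' l)|
      ≤ 2 * (1 + Real.log (1 / ε)) / n := by
  have hshift : ∀ l, |p l - p' l| = |q j l - q' j l| / n := fun l => by
    rw [hp, hp', ← mul_sub, sum_sub_sum_eq_of_eq_of_ne j fun i hi => congrFun (hagree i hi) l,
      abs_mul, abs_of_nonneg (by positivity), one_div_mul_eq_div]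
  have hrow : ∑ l, |q j l - q' j l| ≤ 2 :=
    sum_abs_sub_le_two (fun l => (hq01 j l).1) (fun l => (hq'01 j l).1) (hqsum j) (hq'sum j)
  have hL : 0 ≤ 1 + log (1 / ε) := by
    have : 0 ≤ log (1 / ε) := log_nonneg (one_le_one_div hε0 hε1)
    linarith
  calc |∑ l, p l * log (p l) - ∑ l, p' l * log (p' l)|
      ≤ (1 + log (1 / ε)) * ∑ l, |p l - p' l| := abs_sum_mul_log_sub_sum_mul_log_le hε0 hpε hp'ε
    _ = (1 + log (1 / ε)) * ((∑ l, |q j l - q' j l|) / n) := by simp only [hshift, sum_div]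
    _ ≤ (1 + log (1 / ε)) * (2 / n) := by gcongr
    _ = 2 * (1 + log (1 / ε)) / n := by ring

/-- Bounded-difference step in the proof of Lemma 2: if two arrays of probability rows
agree in all rows except possibly row `j`, and the column averages lie in `[ε, 1]`,
then the negative-entropy values of the averages differ by at most `2(1 + log(1/ε))/n`. -/
theorem bounded_difference_entropy_average
    (n c : ℕ) (hn : 1 ≤ n) (hc : 1 ≤ c) (ε : ℝ) (hε0 : 0 < ε) (hε1 : ε ≤ 1)
    (q q' : Fin n → Fin c → ℝ)
    (hq01 : ∀ i l, q i l ∈ Set.Icc (0 : ℝ) 1) (hq'01 : ∀ i l, q' i l ∈ Set.Icc (0 : ℝ) 1)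
    (hqsum : ∀ i, ∑ l, q i l = 1) (hq'sum : ∀ i, ∑ l, q' i l = 1)
    (j : Fin n) (hagree : ∀ i, i ≠ j → q i = q' i)
    (p p' : Fin c → ℝ)
    (hp : ∀ l, p l = (1 / n : ℝ) * ∑ i, q i l)
    (hp' : ∀ l, p' l = (1 / n : ℝ) * ∑ i, q' i l)
    (hpε : ∀ l, p l ∈ Set.Icc ε 1) (hp'ε : ∀ l, p' l ∈ Set.Icc ε 1) :
    |∑ l, p l * Real.log (p l) - ∑ l, p' l * Real.log (p' l)|
      ≤ 2 * (1 + Real.log (1 / ε)) / n :=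
  bounded_difference_entropy_average_general n c ε hε0 hε1 q q' hq01 hq'01 hqsum hq'sum j hagree p
    p' hp hp' hpε hp'ε
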